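/- (Euler's cevian identity, Euclidean case) Let ABC be a triangle in the Euclidean plane and let a, b, c be points lying in the open sides BC, CA, AB respectively such that the segments Aa, Bb, Cc meet in a common interior point O. Then (AO/Oa)·(BO/Ob)·(CO/Oc) = AO/Oa + BO/Ob + CO/Oc + 2. -/
import Mathlib

section Helpers

variable {V : Type*} [AddCommGroup V] [Module ℝ V]

private lemma bary_unique {A B C : V} (h : AffineIndependent ℝ ![A, B, C])
    {α β γ α' β' γ' : ℝ} (hs : α + β + γ = 1) (hs' : α' + β' + γ' = 1)
    (he : α•A + β•B + γ•C = α'•A + β'•B + γ'•C) :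
    α = α' ∧ β = β' ∧ γ = γ' := by
  rw [affineIndependent_iff] at h
  have h0 := h Finset.univ ![α-α', β-β', γ-γ'] (by simp [Fin.sum_univ_three]; linarith)
    (by
      simp [Fin.sum_univ_three]
      linear_combination (norm := module) he)
  refine ⟨?_, ?_, ?_⟩
  · have := h0 0 (Finset.mem_univ _); simp at this; linarith
  · have := h0 1 (Finset.mem_univ _); simp at this; linarith
  · have := h0 2 (Finset.mem_univ _); simp at this; linarith

private lemma indep_ne {A B C : V} (h : AffineIndependent ℝ ![A, B, C]) {t u v : ℝ}
    (hsum : t + u + v = 0) (hne : t ≠ 0) (heq : t•A + u•B + v•C = 0) : False := by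
  rw [affineIndependent_iff] at h
  have h0 := h Finset.univ ![t, u, v] (by simp [Fin.sum_univ_three]; linarith)
    (by
      simp [Fin.sum_univ_three]
      linear_combination (norm := module) heq)
  have := h0 0 (Finset.mem_univ _)
  simp at this
  exact hne this

end Helpers

private lemma ratio_eq {A P O' : EuclideanSpace ℝ (Fin 2)} {x y : ℝ} (hx : 0 < x) (hy : 0 < y)
    (hxy : x + y = 1) (hO : x•A + y•P = O') (hAP : A ≠ P) :
    dist A O' / dist O' P = y / x := by
  have hx1 : x = 1 - y := by linarith
  subst hx1
  have h1 : A - O' = y • (A - P) := by rw [← hO]; module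
  have h2 : O' - P = (1 - y) • (A - P) := by rw [← hO]; module
  have hd1 : dist A O' = y * dist A P := by
    rw [dist_eq_norm, dist_eq_norm, h1, norm_smul, Real.norm_eq_abs, abs_of_pos hy]
  have hd2 : dist O' P = (1 - y) * dist A P := by
    rw [dist_eq_norm, dist_eq_norm, h2, norm_smul, Real.norm_eq_abs, abs_of_pos hx]
  rw [hd1, hd2, mul_div_mul_right _ _ (dist_ne_zero.2 hAP)]

private lemma key_alg {α β γ : ℝ} (hα : 0 < α) (hβ : 0 < β) (hγ : 0 < γ) (h : α + β + γ = 1) :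
    ((β+γ)/α) * ((γ+α)/β) * ((α+β)/γ) = (β+γ)/α + (γ+α)/β + (α+β)/γ + 2 := by
  have hg : γ = 1 - α - β := by linarith
  subst hg
  field_simp
  ring

/-- **Euler's cevian identity (Euclidean case).**  Let `ABC` be a nondegenerate
triangle in the plane, `a, b, c` points in the open sides `BC, CA, AB`, and
suppose the cevians `Aa, Bb, Cc` meet in a common interior point `O`.  Then
`(AO/Oa)·(BO/Ob)·(CO/Oc) = AO/Oa + BO/Ob + CO/Oc + 2`. -/
theorem euler_cevian_identity (A B C a b c O : EuclideanSpace ℝ (Fin 2))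
    (hABC : AffineIndependent ℝ ![A, B, C])
    (ha : a ∈ openSegment ℝ B C) (hb : b ∈ openSegment ℝ C A)
    (hc : c ∈ openSegment ℝ A B)
    (hOa : O ∈ openSegment ℝ A a) (hOb : O ∈ openSegment ℝ B b)
    (hOc : O ∈ openSegment ℝ C c) :
    (dist A O / dist O a) * (dist B O / dist O b) * (dist C O / dist O c) =
      dist A O / dist O a + dist B O / dist O b + dist C O / dist O c + 2 := by
  obtain ⟨u, u', hu, hu', huu, hAeq⟩ := ha
  obtain ⟨v, v', hv, hv', hvv, hBeq⟩ := hb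
  obtain ⟨w, w', hw, hw', hww, hCeq⟩ := hc
  obtain ⟨x, y, hx, hy, hxy, hOA⟩ := hOa
  obtain ⟨p, q, hp, hq, hpq, hOB⟩ := hOb
  obtain ⟨r, s, hr, hs, hrs, hOC⟩ := hOc
  -- combined barycentric representations of O
  have E1 : x•A + (y*u)•B + (y*u')•C = O := by
    rw [← hOA, ← hAeq]; module
  have E2 : (q*v')•A + p•B + (q*v)•C = O := by
    rw [← hOB, ← hBeq]; module
  have E3 : (s*w)•A + (s*w')•B + r•C = O := by
    rw [← hOC, ← hCeq]; module
  have s1 : x + y*u + y*u' = 1 := by linear_combination hxy + y*huu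
  have s2 : q*v' + p + q*v = 1 := by linear_combination hpq + q*hvv
  have s3 : s*w + s*w' + r = 1 := by linear_combination hrs + s*hww
  obtain ⟨e1, e2, e3⟩ := bary_unique hABC s1 s2 (E1.trans E2.symm)
  obtain ⟨f1, f2, f3⟩ := bary_unique hABC s1 s3 (E1.trans E3.symm)
  -- nondegeneracy of the three cevian feet
  have hAa : A ≠ a := fun h => indep_ne hABC (t := 1) (u := -u) (v := -u')
    (by linarith) one_ne_zero (by rw [h]; linear_combination (norm := module) -hAeq)
  have hBb : B ≠ b := fun h => indep_ne hABC (t := -v') (u := 1) (v := -v)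
    (by linarith) (by intro h0; linarith) (by rw [h]; linear_combination (norm := module) -hBeq)
  have hCc : C ≠ c := fun h => indep_ne hABC (t := -w) (u := -w') (v := 1)
    (by linarith) (by intro h0; linarith) (by rw [h]; linear_combination (norm := module) -hCeq)
  -- the three distance ratios
  have R1 : dist A O / dist O a = y / x := ratio_eq hx hy hxy hOA hAa
  have R2 : dist B O / dist O b = q / p := ratio_eq hp hq hpq hOB hBb
  have R3 : dist C O / dist O c = s / r := ratio_eq hr hs hrs hOC hCc
  have hy2 : y = y*u + y*u' := by linear_combination (-y)*huu
  have hq2 : q = y*u' + x := by linear_combination (-q)*hvv - e3 - e1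
  have hp2 : p = y*u := e2.symm
  have hs2 : s = x + y*u := by linear_combination (-s)*hww - f1 - f2
  have hr2 : r = y*u' := f3.symm
  rw [R1, R2, R3, hy2, hq2, hp2, hs2, hr2]
  exact key_alg hx (mul_pos hy hu) (mul_pos hy hu') s1
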